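/- For all x ∈ (0,1) and p ∈ (-∞,-1] ∪ [1,∞), H₁(x³,p) ≥ x, where H₁(y,p) = (2p + (p+3)y)/(3p+1+2y); moreover for p ∈ (-∞,-1] ∪ [0,∞), H₁(x³,p) ≤ x for all x ∈ (0,1) if and only if p = 0. -/
import Mathlib


noncomputable def H1 (y p : ℝ) : ℝ := (2*p + (p+3)*y) / (3*p + 1 + 2*y)

theorem stmt11 :
    (∀ x ∈ Set.Ioo (0:ℝ) 1, ∀ p : ℝ, (p ≤ -1 ∨ 1 ≤ p) → x ≤ H1 (x^3) p) ∧
    (∀ p : ℝ, (p ≤ -1 ∨ 0 ≤ p) →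
      ((∀ x ∈ Set.Ioo (0:ℝ) 1, H1 (x^3) p ≤ x) ↔ p = 0)) := by
  constructor
  · rintro x ⟨hx0, hx1⟩ p (hp | hp)
    · have hx3 : x^3 < 1 := by nlinarith [mul_pos hx0 hx0, mul_pos (mul_pos hx0 hx0) hx0]
      have hD : 3*p + 1 + 2*x^3 < 0 := by nlinarith
      rw [H1, le_div_iff_of_neg hD]
      have key : (x-1)^2 * (p*(x+2) - 2*x^2 - x) ≤ 0 :=
        mul_nonpos_of_nonneg_of_nonpos (sq_nonneg _) (by nlinarith)
      nlinarith [key]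
    · have hD : (0:ℝ) < 3*p + 1 + 2*x^3 := by positivity
      rw [H1, le_div_iff₀ hD]
      have key : 0 ≤ (x-1)^2 * (p*(x+2) - 2*x^2 - x) :=
        mul_nonneg (sq_nonneg _) (by nlinarith)
      nlinarith [key]
  · rintro p (hp | hp)
    · constructor
      · intro h
        exfalso
        have h2 := h (1/2) (by norm_num)
        have hD : 3*p + 1 + 2*((1:ℝ)/2)^3 < 0 := by nlinarith
        rw [H1, div_le_iff_of_neg hD] at h2
        nlinarith
      · intro h; linarith
    · constructor
      · intro h
        by_contra hne
        have hp0 : 0 < p := lt_of_le_of_ne hp (Ne.symm hne)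
        set x := min p 1 / 2 with hxdef
        have hx0 : 0 < x := by positivity
        have hx1 : x < 1 := by
          have : min p 1 ≤ 1 := min_le_right _ _
          simp only [hxdef]; linarith
        have h2 := h x ⟨hx0, hx1⟩
        have hD : (0:ℝ) < 3*p + 1 + 2*x^3 := by positivity
        rw [H1, div_le_iff₀ hD] at h2
        have hxp : x ≤ p/2 := by
          have : min p 1 ≤ p := min_le_left _ _
          simp only [hxdef]; linarith
        have h1x : 0 < (1-x)*(1-x) := mul_pos (by linarith) (by linarith)
        have hfac : 0 < p*(x+2) - 2*x^2 - x := by nlinarith [mul_pos hx0 hx0]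
        nlinarith [mul_pos h1x hfac]
      · rintro rfl
        rintro x ⟨hx0, hx1⟩
        have hD : (0:ℝ) < 3*0 + 1 + 2*x^3 := by positivity
        rw [H1, div_le_iff₀ hD]
        have key : 0 ≤ x * ((x-1)^2 * (2*x+1)) :=
          mul_nonneg hx0.le (mul_nonneg (sq_nonneg _) (by linarith))
        nlinarith [key]
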